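/- For every integer k ≥ 1 and every β ∈ (0,1], there exists a chore instance with 2 agents having identical binary supermodular costs (on 2k+1 chores) in which no complete allocation is both Pareto efficient and β-EFkX. Specifically, with one chore of unit marginal cost and k complementary pairs (cost 1 only when both chores of a pair are held), every Pareto efficient allocation has cost profile (0,1) or (1,0), and the agent with cost 1 retains cost 1 after removing any k chores while the other agent has cost 0. -/

import Mathlib

/-- Binary marginals for a nonnegative-integer-valued cost function on sets of chores
(chores indexed by natural numbers). -/
def BinaryMarginals (c : Finset ℕ → ℕ) : Prop :=
  ∀ (S : Finset ℕ) (a : ℕ), a ∉ S →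
    c (insert a S) = c S ∨ c (insert a S) = c S + 1

/-- Supermodularity (increasing marginals), in addition form. -/
def Supermod (c : Finset ℕ → ℕ) : Prop :=
  ∀ (S T : Finset ℕ) (a : ℕ), S ⊆ T → a ∉ T →
    c (insert a S) + c T ≤ c (insert a T) + c S

/-- The chores are `0, 1, …, 2k`; chore `2k` always has marginal cost `1`, and for each
`j < k` the pair `{2j, 2j+1}` are complements: a cost of `1` is incurred exactly when
both chores of the pair are held. -/
def pairCost (k : ℕ) (S : Finset ℕ) : ℕ :=
  (if 2 * k ∈ S then 1 else 0) +
    ((Finset.range k).filter fun j => 2 * j ∈ S ∧ 2 * j + 1 ∈ S).card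

/-- A complete allocation of the `2k+1` chores between the two agents. -/
def IsAlloc (k : ℕ) (A : Fin 2 → Finset ℕ) : Prop :=
  Disjoint (A 0) (A 1) ∧ A 0 ∪ A 1 = Finset.range (2 * k + 1)

/-- Pareto efficiency for two agents with the identical cost `pairCost k`. -/
def ParetoEff (k : ℕ) (A : Fin 2 → Finset ℕ) : Prop :=
  ¬ ∃ B : Fin 2 → Finset ℕ, IsAlloc k B ∧
    (∀ i, pairCost k (B i) ≤ pairCost k (A i)) ∧
    (∃ i, pairCost k (B i) < pairCost k (A i))

/-- `β`-EFkX: for every envying pair and every removal of `k` chores from the envying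
agent's bundle, a `β`-fraction of the remaining cost is at most the cost of the other
agent's bundle. -/
def BetaEFkX (β : ℝ) (k : ℕ) (A : Fin 2 → Finset ℕ) : Prop :=
  ∀ i j : Fin 2, k ≤ (A i).card → ∀ T ⊆ A i, T.card = k →
    β * (pairCost k (A i \ T) : ℝ) ≤ (pairCost k (A j) : ℝ)


/-! `pairCost k` counts the blocks `{0,1}, {2,3}, …, {2k-2,2k-1}, {2k}` of the chores that a
bundle contains in full. Such a block count is supermodular, and its marginals are binary
because the blocks are disjoint. Giving one agent the even chores below `2k` and the other the
rest realises the profile `(0,1)`, while every allocation costs at least `1` in total since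
someone holds chore `2k`; so a Pareto efficient allocation has profile `(0,1)` or `(1,0)`.
The agent of cost `0` holds at most one chore of each pair, hence at most `k` chores, so the
other agent holds at least `k+1` and can drop `k` of them while keeping chore `2k`. -/

open Finset

section BlockCount

variable {ι : Type*} (J : Finset ι) (B : ι → Finset ℕ)

def blockCount (S : Finset ℕ) : ℕ :=
  ∑ j ∈ J, if B j ⊆ S then 1 else 0

theorem supermod_blockCount : Supermod (blockCount J B) := by
  intro S T a hST haT
  simp only [blockCount, ← sum_add_distrib]
  refine sum_le_sum fun j _ => ?_
  by_cases hT : B j ⊆ T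
  · have hS : B j ⊆ insert a S → B j ⊆ S := fun h =>
      (subset_insert_iff_of_notMem fun ha => haT (hT ha)).1 h
    have : B j ⊆ insert a T := hT.trans (subset_insert a T)
    split_ifs <;> simp_all
  · have : B j ⊆ insert a S → B j ⊆ insert a T := fun h => h.trans (insert_subset_insert a hST)
    split_ifs <;> simp_all

theorem blockCount_mono {S T : Finset ℕ} (hST : S ⊆ T) : blockCount J B S ≤ blockCount J B T :=
  sum_le_sum fun j _ => by
    split_ifs with hS hT <;> first | omega | exact absurd (hS.trans hST) hT

theorem blockCount_insert_le (a : ℕ) (S : Finset ℕ) :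
    blockCount J B (insert a S) ≤ blockCount J B S + #{j ∈ J | a ∈ B j} := by
  rw [blockCount, blockCount, card_filter, ← sum_add_distrib]
  refine sum_le_sum fun j _ => ?_
  by_cases ha : a ∈ B j
  · split_ifs <;> omega
  · simp only [subset_insert_iff_of_notMem ha, if_neg ha]
    omega

theorem binaryMarginals_blockCount (hB : (J : Set ι).PairwiseDisjoint B) :
    BinaryMarginals (blockCount J B) := by
  intro S a _
  have hunique : #{j ∈ J | a ∈ B j} ≤ 1 := by
    refine card_le_one.2 fun i hi j hj => ?_
    rw [mem_filter] at hi hj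
    by_contra hij
    exact disjoint_left.1 (hB hi.1 hj.1 hij) hi.2 hj.2
  have := blockCount_mono J B (subset_insert a S)
  have := blockCount_insert_le J B a S
  omega

end BlockCount

def choreBlock (k j : ℕ) : Finset ℕ := {x ∈ range (2 * k + 1) | x / 2 = j}

theorem choreBlock_of_lt {k j : ℕ} (hj : j < k) : choreBlock k j = {2 * j, 2 * j + 1} := by
  ext x; simp only [choreBlock, mem_filter, mem_range, mem_insert, mem_singleton]; omega

theorem choreBlock_self (k : ℕ) : choreBlock k k = {2 * k} := by
  ext x; simp only [choreBlock, mem_filter, mem_range, mem_singleton]; omega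

theorem pairwiseDisjoint_choreBlock (k : ℕ) (J : Finset ℕ) :
    (J : Set ℕ).PairwiseDisjoint (choreBlock k) := by
  intro i _ j _ hij
  refine disjoint_left.2 fun x hi hj => hij ?_
  rw [choreBlock, mem_filter] at hi hj
  rw [← hi.2, hj.2]

theorem pairCost_eq_blockCount (k : ℕ) :
    pairCost k = blockCount (range (k + 1)) (choreBlock k) := by
  funext S
  simp only [blockCount, sum_range_succ, choreBlock_self, singleton_subset_iff, pairCost,
    card_filter]
  rw [add_comm]
  congr 1
  refine sum_congr rfl fun j hj => ?_
  simp only [choreBlock_of_lt (mem_range.1 hj), insert_subset_iff, singleton_subset_iff]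

theorem binaryMarginals_pairCost (k : ℕ) : BinaryMarginals (pairCost k) :=
  pairCost_eq_blockCount k ▸ binaryMarginals_blockCount _ _ (pairwiseDisjoint_choreBlock k _)

theorem supermod_pairCost (k : ℕ) : Supermod (pairCost k) :=
  pairCost_eq_blockCount k ▸ supermod_blockCount _ _

theorem one_le_pairCost {k : ℕ} {S : Finset ℕ} (h : 2 * k ∈ S) : 1 ≤ pairCost k S := by
  rw [pairCost, if_pos h]; omega

def evenChores (k : ℕ) : Finset ℕ := {x ∈ range (2 * k) | Even x}

theorem pairCost_evenChores (k : ℕ) : pairCost k (evenChores k) = 0 := by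
  simp [pairCost, evenChores]

theorem pairCost_compl_evenChores (k : ℕ) :
    pairCost k (range (2 * k + 1) \ evenChores k) = 1 := by
  simp [pairCost, evenChores]

theorem evenChores_subset (k : ℕ) : evenChores k ⊆ range (2 * k + 1) :=
  (filter_subset _ _).trans (range_subset_range.2 (by omega))

theorem isAlloc_of_subset {k : ℕ} {S : Finset ℕ} (h : S ⊆ range (2 * k + 1)) :
    IsAlloc k ![S, range (2 * k + 1) \ S] :=
  ⟨disjoint_sdiff, union_sdiff_of_subset h⟩

theorem IsAlloc.swap {k : ℕ} {A : Fin 2 → Finset ℕ} (h : IsAlloc k A) :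
    IsAlloc k ![A 1, A 0] :=
  ⟨h.1.symm, union_comm (A 0) (A 1) ▸ h.2⟩

theorem IsAlloc.one_le_pairCost_add {k : ℕ} {A : Fin 2 → Finset ℕ} (h : IsAlloc k A) :
    1 ≤ pairCost k (A 0) + pairCost k (A 1) := by
  have h2k : 2 * k ∈ A 0 ∪ A 1 := h.2 ▸ mem_range.2 (by omega)
  rcases mem_union.1 h2k with h0 | h1
  · exact (one_le_pairCost h0).trans (Nat.le_add_right _ _)
  · exact (one_le_pairCost h1).trans (Nat.le_add_left _ _)

theorem ParetoEff.pairCost_eq_of_le {k : ℕ} {A B : Fin 2 → Finset ℕ} (hP : ParetoEff k A)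
    (hB : IsAlloc k B) (hle : ∀ i, pairCost k (B i) ≤ pairCost k (A i)) (i : Fin 2) :
    pairCost k (B i) = pairCost k (A i) := by
  by_contra hne
  exact hP ⟨B, hB, hle, i, lt_of_le_of_ne (hle i) hne⟩

theorem ParetoEff.pairCost_profile {k : ℕ} {A : Fin 2 → Finset ℕ} (hA : IsAlloc k A)
    (hP : ParetoEff k A) :
    (pairCost k (A 0) = 0 ∧ pairCost k (A 1) = 1) ∨
      (pairCost k (A 0) = 1 ∧ pairCost k (A 1) = 0) := by
  have hsplit := isAlloc_of_subset (evenChores_subset k)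
  by_cases h1 : 1 ≤ pairCost k (A 1)
  · have h := hP.pairCost_eq_of_le hsplit <| Fin.forall_fin_two.2
      ⟨by simp [pairCost_evenChores], by simpa [pairCost_compl_evenChores] using h1⟩
    left
    simpa [pairCost_evenChores, pairCost_compl_evenChores, eq_comm] using
      And.intro (h 0) (h 1)
  · have h0 : 1 ≤ pairCost k (A 0) := by have := hA.one_le_pairCost_add; omega
    have h := hP.pairCost_eq_of_le hsplit.swap <| Fin.forall_fin_two.2
      ⟨by simpa [pairCost_compl_evenChores] using h0, by simp [pairCost_evenChores]⟩
    right
    simpa [pairCost_evenChores, pairCost_compl_evenChores, eq_comm] using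
      And.intro (h 0) (h 1)

theorem card_le_of_pairCost_eq_zero {k : ℕ} {R : Finset ℕ} (hR : pairCost k R = 0)
    (hsub : R ⊆ range (2 * k + 1)) : #R ≤ k := by
  simp only [pairCost, Nat.add_eq_zero_iff, ite_eq_right_iff, card_eq_zero,
    filter_eq_empty_iff, mem_range] at hR
  obtain ⟨h2k, hpairs⟩ := hR
  have hlt : ∀ x ∈ R, x < 2 * k := fun x hx => by
    have := mem_range.1 (hsub hx)
    have : x ≠ 2 * k := fun e => by simpa using h2k (e ▸ hx)
    omega
  simpa using card_le_card_of_injOn (· / 2)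
    (fun x hx => mem_range.2 (show x / 2 < k by have := hlt x hx; omega)) fun x hx y hy hxy => by
      by_contra hne
      have hm := hlt x hx
      simp only at hxy
      rcases (by omega : x = 2 * (x / 2) ∧ y = 2 * (x / 2) + 1 ∨
          y = 2 * (x / 2) ∧ x = 2 * (x / 2) + 1) with ⟨ex, ey⟩ | ⟨ey, ex⟩
      · exact hpairs (by omega) ⟨ex ▸ hx, ey ▸ hy⟩
      · exact hpairs (by omega) ⟨ey ▸ hy, ex ▸ hx⟩

theorem exists_removal_one_le_pairCost {k : ℕ} {S R : Finset ℕ}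
    (hSR : S ∪ R = range (2 * k + 1)) (hR : pairCost k R = 0) :
    ∃ T ⊆ S, #T = k ∧ 1 ≤ pairCost k (S \ T) := by
  have h2kR : 2 * k ∉ R := fun h => by simpa [hR] using one_le_pairCost h
  have h2kS : 2 * k ∈ S := by
    have : 2 * k ∈ S ∪ R := hSR ▸ mem_range.2 (by omega)
    simpa [h2kR] using this
  have hRcard := card_le_of_pairCost_eq_zero hR (hSR ▸ subset_union_right)
  have hS_card : 2 * k + 1 ≤ #S + #R := by
    simpa [hSR] using card_union_le S R
  obtain ⟨T, hT, hTk⟩ := exists_subset_card_eq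
    (show k ≤ #(S.erase (2 * k)) by rw [card_erase_of_mem h2kS]; omega)
  have h2kT : 2 * k ∉ T := fun h => by simpa using hT h
  exact ⟨T, hT.trans (erase_subset _ _), hTk, one_le_pairCost (mem_sdiff.2 ⟨h2kS, h2kT⟩)⟩

theorem not_betaEFkX_of_pairCost_eq_zero {β : ℝ} {k : ℕ} {A : Fin 2 → Finset ℕ} (hβ : 0 < β)
    {i j : Fin 2} (hA : A i ∪ A j = range (2 * k + 1)) (hj : pairCost k (A j) = 0) :
    ¬ BetaEFkX β k A := by
  intro hE
  obtain ⟨T, hT, hTk, hpos⟩ := exists_removal_one_le_pairCost hA hj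
  have h := hE i j (hTk ▸ card_le_card hT) T hT hTk
  rw [hj, Nat.cast_zero] at h
  exact (mul_pos hβ (Nat.cast_pos.2 hpos)).not_ge h

theorem no_pareto_efficient_beta_EFkX_general (k : ℕ) (β : ℝ) (hβ0 : 0 < β) :
    (BinaryMarginals (pairCost k) ∧ Supermod (pairCost k)) ∧
    (∀ A : Fin 2 → Finset ℕ, IsAlloc k A → ParetoEff k A →
      (pairCost k (A 0) = 0 ∧ pairCost k (A 1) = 1) ∨
      (pairCost k (A 0) = 1 ∧ pairCost k (A 1) = 0)) ∧
    (∀ A : Fin 2 → Finset ℕ, IsAlloc k A → ¬ (ParetoEff k A ∧ BetaEFkX β k A)) := by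
  refine ⟨⟨binaryMarginals_pairCost k, supermod_pairCost k⟩,
    fun A hA hP => hP.pairCost_profile hA, ?_⟩
  rintro A hA ⟨hP, hE⟩
  rcases hP.pairCost_profile hA with ⟨h0, -⟩ | ⟨-, h1⟩
  · exact not_betaEFkX_of_pairCost_eq_zero hβ0 (i := 1) (union_comm (A 0) (A 1) ▸ hA.2) h0 hE
  · exact not_betaEFkX_of_pairCost_eq_zero hβ0 (i := 0) hA.2 h1 hE

/-- for every `k ≥ 1` and `β ∈ (0,1]`, in the instance with `2k+1` chores
and two agents with the identical binary supermodular cost `pairCost k`, every Pareto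
efficient complete allocation has cost profile `(0,1)` or `(1,0)`, and no complete
allocation is both Pareto efficient and `β`-EFkX. -/
theorem no_pareto_efficient_beta_EFkX (k : ℕ) (hk : 1 ≤ k) (β : ℝ) (hβ0 : 0 < β)
    (hβ1 : β ≤ 1) :
    (BinaryMarginals (pairCost k) ∧ Supermod (pairCost k)) ∧
    (∀ A : Fin 2 → Finset ℕ, IsAlloc k A → ParetoEff k A →
      (pairCost k (A 0) = 0 ∧ pairCost k (A 1) = 1) ∨
      (pairCost k (A 0) = 1 ∧ pairCost k (A 1) = 0)) ∧
    (∀ A : Fin 2 → Finset ℕ, IsAlloc k A → ¬ (ParetoEff k A ∧ BetaEFkX β k A)) :=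
  no_pareto_efficient_beta_EFkX_general k β hβ0
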